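/- arXiv:1704.05160 — 2 statements merged into one kernel-verified Lean document; each statement's English description precedes it below -/
import Mathlib

section
/- Let K be a field of characteristic zero and let Q(t) ∈ K[t] be monic of degree d. Suppose the sequences f₁, f₂, …, f_r : ℕ → K each satisfy a linear recurrence with characteristic polynomial Q(t). Then the pointwise product f : ℕ → K, f(ℓ) = f₁(ℓ)f₂(ℓ)⋯f_r(ℓ), satisfies a linear recurrence with characteristic polynomial Q^⟨h_r⟩(t). -/
/-- `f : ℕ → R` satisfies a linear recurrence with characteristic polynomial `Q`, i.e.
`Σ_k Q.coeff k · f(n+k) = 0` for all but finitely many `n`. -/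
def SatisfiesLinRec {R : Type*} [CommRing R] (f : ℕ → R) (Q : Polynomial R) : Prop :=
  ∀ᶠ n in Filter.cofinite, ∑ k ∈ Finset.range (Q.natDegree + 1), Q.coeff k * f (n + k) = 0

/-- `Q^⟨h_r⟩(t) = Π_{1 ≤ i₁ ≤ … ≤ i_r ≤ d} (t − γ_{i₁}⋯γ_{i_r})`, for `γ` the roots of `Q`. -/
noncomputable def plethH {L : Type*} [CommRing L] {d : ℕ} (γ : Fin d → L) (r : ℕ) :
    Polynomial L :=
  ∏ᶠ g ∈ {g : Fin r → Fin d | Monotone g},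
    (Polynomial.X - Polynomial.C (∏ i, γ (g i)))

open Filter Polynomial

namespace Stmt4

variable {L : Type*} [CommRing L]

abbrev Seq (L : Type*) := Filter.Germ (Filter.cofinite : Filter ℕ) L

lemma shift_tendsto : Tendsto (fun n : ℕ => n + 1) cofinite cofinite :=
  Function.Injective.tendsto_cofinite (fun a b h => by omega)

omit [CommRing L] in
lemma shift_resp : (Relator.LiftFun (Filter.cofinite (α := ℕ)).EventuallyEq Filter.cofinite.EventuallyEq)
    (fun (f : ℕ → L) => fun n => f (n + 1)) (fun f => fun n => f (n + 1)) := by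
  intro f g h
  exact h.comp_tendsto shift_tendsto

/-- The shift operator on germs. -/
def Esh : Seq L → Seq L := Filter.Germ.map' _ shift_resp

set_option linter.unusedSectionVars false in
@[simp] lemma Esh_coe (f : ℕ → L) : Esh (↑f : Seq L) = ↑(fun n => f (n + 1)) := rfl

lemma Esh_add (x y : Seq L) : Esh (x + y) = Esh x + Esh y := by
  refine Filter.Germ.inductionOn₂ x y fun f g => ?_
  rw [← Germ.coe_add, Esh_coe, Esh_coe, Esh_coe, ← Germ.coe_add]
  rfl

lemma Esh_mul (x y : Seq L) : Esh (x * y) = Esh x * Esh y := by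
  refine Filter.Germ.inductionOn₂ x y fun f g => ?_
  rw [← Germ.coe_mul, Esh_coe, Esh_coe, Esh_coe, ← Germ.coe_mul]
  rfl

lemma Esh_smul (c : L) (x : Seq L) : Esh (c • x) = c • Esh x := by
  refine Filter.Germ.inductionOn x fun f => ?_
  rw [← Germ.coe_smul, Esh_coe, Esh_coe, ← Germ.coe_smul]
  rfl

/-- The shift operator as an `L`-linear endomorphism of germs. -/
def Elin : Module.End L (Seq L) where
  toFun := Esh
  map_add' := Esh_add
  map_smul' := Esh_smul

@[simp] lemma Elin_coe (f : ℕ → L) : Elin (↑f : Seq L) = ↑(fun n => f (n + 1)) := rfl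

lemma Elin_pow_coe (k : ℕ) (f : ℕ → L) :
    (Elin ^ k) (↑f : Seq L) = ↑(fun n => f (n + k)) := by
  induction k with
  | zero => simp
  | succ k ih =>
    rw [pow_succ', Module.End.mul_apply, ih, Elin_coe]
    congr 1; funext n; congr 1; omega

lemma aeval_Elin_coe (P : L[X]) (f : ℕ → L) :
    (Polynomial.aeval Elin P) (↑f : Seq L) =
      ↑(fun n => ∑ k ∈ Finset.range (P.natDegree + 1), P.coeff k * f (n + k)) := by
  rw [Polynomial.aeval_eq_sum_range, LinearMap.coe_sum, Finset.sum_apply]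
  have : ∀ k ∈ Finset.range (P.natDegree + 1),
      (P.coeff k • Elin ^ k) (↑f : Seq L) = ↑(fun n => P.coeff k * f (n + k)) := by
    intro k _
    rw [LinearMap.smul_apply, Elin_pow_coe, ← Germ.coe_smul]
    rfl
  rw [Finset.sum_congr rfl this]
  have := map_sum (Germ.coeRingHom (cofinite : Filter ℕ))
    (fun k => fun n => P.coeff k * f (n + k)) (Finset.range (P.natDegree + 1))
  simp only [Germ.coe_coeRingHom] at this
  rw [← this]
  congr 1
  funext n
  simp

lemma satisfiesLinRec_iff (f : ℕ → L) (P : L[X]) :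
    SatisfiesLinRec f P ↔ (Polynomial.aeval Elin P) (↑f : Seq L) = 0 := by
  rw [aeval_Elin_coe, ← Germ.coe_zero, Germ.coe_eq]
  rfl


instance : SMulCommClass L (Seq L) (Seq L) where
  smul_comm c x y := by
    refine Filter.Germ.inductionOn₂ x y fun f g => ?_
    rw [← Germ.coe_smul', ← Germ.coe_smul, ← Germ.coe_smul, ← Germ.coe_smul']
    congr 1; funext n
    simp [smul_eq_mul, mul_left_comm]

instance : IsScalarTower L (Seq L) (Seq L) where
  smul_assoc c x y := by
    refine Filter.Germ.inductionOn₂ x y fun f g => ?_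
    rw [← Germ.coe_smul, ← Germ.coe_smul', ← Germ.coe_smul', ← Germ.coe_smul]
    congr 1; funext n
    simp [smul_eq_mul, mul_assoc]

section Main

variable {d r : ℕ} (γ : Fin d → L) (fb : Fin r → Seq L)

/-- Partial products of linear factors of `Q`, from level `k` up. -/
noncomputable def Pk (k : ℕ) : L[X] :=
  ∏ j ∈ Finset.univ.filter (fun j : Fin d => k ≤ (j : ℕ)), (X - C (γ j))

/-- The flag of auxiliary sequences. -/
noncomputable def u (i : Fin r) (k : ℕ) : Seq L := Polynomial.aeval Elin (Pk γ k) (fb i)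

/-- Eigenvalue at level `k`. -/
noncomputable def Ev (k : ℕ) : L :=
  if h : 0 < k ∧ k ≤ d then γ ⟨k - 1, by omega⟩ else 0

/-- Symmetrized products. -/
noncomputable def T (b : Fin r → ℕ) : Seq L :=
  ∑ σ : Equiv.Perm (Fin r), ∏ i, u γ fb i (b (σ i))

variable (h0 : ∀ i, Polynomial.aeval Elin (∏ j, (X - C (γ j))) (fb i) = 0)

lemma Pk_zero : Pk γ 0 = ∏ j, (X - C (γ j)) := by
  unfold Pk
  rw [Finset.filter_true_of_mem (fun j _ => Nat.zero_le _)]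

include h0 in
lemma u_zero (i : Fin r) : u γ fb i 0 = 0 := by
  rw [u, Pk_zero, h0]

lemma Pk_succ (k : ℕ) (hk : k < d) :
    Pk γ k = (X - C (γ ⟨k, hk⟩)) * Pk γ (k + 1) := by
  have hset : Finset.univ.filter (fun j : Fin d => k ≤ (j : ℕ)) =
      insert ⟨k, hk⟩ (Finset.univ.filter (fun j : Fin d => k + 1 ≤ (j : ℕ))) := by
    ext j
    simp only [Finset.mem_insert, Finset.mem_filter, Finset.mem_univ, true_and]
    constructor
    · intro h
      rcases eq_or_lt_of_le h with h' | h'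
      · left; exact Fin.ext h'.symm
      · right; omega
    · rintro (rfl | h)
      · simp
      · omega
  unfold Pk
  rw [hset, Finset.prod_insert (by simp)]

include h0 in
lemma Elin_u (i : Fin r) (k : ℕ) (hk : k ≤ d) :
    Elin (u γ fb i k) = Ev γ k • u γ fb i k + u γ fb i (k - 1) := by
  rcases Nat.eq_zero_or_pos k with rfl | hpos
  · rw [u_zero γ fb h0]
    simp [Ev]
  · have hk1 : k - 1 < d := by omega
    have hEv : Ev γ k = γ ⟨k - 1, hk1⟩ := by rw [Ev, dif_pos ⟨hpos, hk⟩]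
    have hstep : u γ fb i (k - 1) = Elin (u γ fb i k) - Ev γ k • u γ fb i k := by
      rw [u, u, Pk_succ γ (k - 1) hk1]
      have hk' : k - 1 + 1 = k := by omega
      rw [hk', map_mul]
      rw [Module.End.mul_apply]
      simp only [map_sub, Polynomial.aeval_X, Polynomial.aeval_C]
      rw [LinearMap.sub_apply]
      congr 1
      rw [hEv]
      rfl
    rw [hstep]; abel

/-- A monoid-hom version of the shift. -/
def EshM : Seq L →* Seq L where
  toFun := Esh
  map_one' := rfl
  map_mul' := Esh_mul

lemma Elin_prod {ι : Type*} (s : Finset ι) (v : ι → Seq L) :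
    Elin (∏ i ∈ s, v i) = ∏ i ∈ s, Elin (v i) :=
  map_prod EshM v s

lemma prod_smul_seq {ι : Type*} (s : Finset ι) (c : ι → L) (v : ι → Seq L) :
    ∏ i ∈ s, (c i • v i) = (∏ i ∈ s, c i) • ∏ i ∈ s, v i := by
  induction s using Finset.cons_induction with
  | empty => simp
  | cons j s hj ih =>
    rw [Finset.prod_cons, Finset.prod_cons, Finset.prod_cons, ih, smul_mul_smul_comm]

include h0 in
lemma T_eq_zero (b : Fin r → ℕ) (j0 : Fin r) (hj : b j0 = 0) : T γ fb b = 0 := by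
  rw [T]
  apply Finset.sum_eq_zero
  intro σ _
  apply Finset.prod_eq_zero (Finset.mem_univ (σ⁻¹ j0))
  have hb0 : b (σ (σ⁻¹ j0)) = 0 := by
    rw [show σ (σ⁻¹ j0) = j0 from σ.apply_symm_apply j0, hj]
  rw [hb0]
  exact u_zero γ fb h0 _

include h0 in
lemma Elin_T (b : Fin r → ℕ) (hb : ∀ j, b j ≤ d) :
    Elin (T γ fb b) = ∑ S : Finset (Fin r), (∏ j ∈ S, Ev γ (b j)) •
      T γ fb (fun j => if j ∈ S then b j else b j - 1) := by
  rw [T, map_sum]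
  have step1 : ∀ σ : Equiv.Perm (Fin r),
      Elin (∏ i, u γ fb i (b (σ i))) =
      ∑ t ∈ (Finset.univ : Finset (Fin r)).powerset,
        (∏ i ∈ t, Ev γ (b (σ i))) •
          ((∏ i ∈ t, u γ fb i (b (σ i))) *
            ∏ i ∈ Finset.univ \ t, u γ fb i (b (σ i) - 1)) := by
    intro σ
    rw [Elin_prod]
    rw [Finset.prod_congr rfl (fun i _ => Elin_u γ fb h0 i (b (σ i)) (hb (σ i)))]
    rw [Finset.prod_add]
    refine Finset.sum_congr rfl fun t _ => ?_
    rw [prod_smul_seq, smul_mul_assoc]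
  have step2 : ∀ σ : Equiv.Perm (Fin r),
      (∑ t ∈ (Finset.univ : Finset (Fin r)).powerset,
        (∏ i ∈ t, Ev γ (b (σ i))) •
          ((∏ i ∈ t, u γ fb i (b (σ i))) *
            ∏ i ∈ Finset.univ \ t, u γ fb i (b (σ i) - 1))) =
      ∑ S : Finset (Fin r), (∏ j ∈ S, Ev γ (b j)) •
        ∏ i, u γ fb i (if σ i ∈ S then b (σ i) else b (σ i) - 1) := by
    intro σ
    rw [Finset.powerset_univ]
    refine Fintype.sum_equiv σ.finsetCongr _ _ fun t => ?_
    rw [Equiv.finsetCongr_apply, Finset.prod_map]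
    simp only [Equiv.coe_toEmbedding, Finset.mem_map_equiv, Equiv.symm_apply_apply]
    congr 1
    symm
    calc ∏ i, u γ fb i (if i ∈ t then b (σ i) else b (σ i) - 1)
        = ∏ i, (if i ∈ t then u γ fb i (b (σ i)) else u γ fb i (b (σ i) - 1)) :=
          Finset.prod_congr rfl fun i _ => apply_ite (u γ fb i) _ _ _
      _ = (∏ i ∈ Finset.univ.filter (fun i => i ∈ t), u γ fb i (b (σ i))) *
            ∏ i ∈ Finset.univ.filter (fun i => ¬ i ∈ t), u γ fb i (b (σ i) - 1) :=
          Finset.prod_ite _ _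
      _ = (∏ i ∈ t, u γ fb i (b (σ i))) *
            ∏ i ∈ Finset.univ \ t, u γ fb i (b (σ i) - 1) := by
          congr 1
          · congr 1; ext i; simp
          · congr 1; ext i; simp
  rw [Finset.sum_congr rfl fun σ _ => (step1 σ).trans (step2 σ)]
  rw [Finset.sum_comm]
  refine Finset.sum_congr rfl fun S _ => ?_
  rw [T, Finset.smul_sum]

/-- Monotone functions as a finset. -/
noncomputable def MonSet (r d : ℕ) : Finset (Fin r → Fin d) :=
  @Finset.filter _ (fun g => Monotone g) (Classical.decPred _) Finset.univ

lemma mem_MonSet {r d : ℕ} {g : Fin r → Fin d} : g ∈ MonSet r d ↔ Monotone g := by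
  simp [MonSet, Finset.mem_filter]

/-- Monotone functions with bounded level sum. -/
noncomputable def MonN (r d N : ℕ) : Finset (Fin r → Fin d) :=
  (MonSet r d).filter (fun g => (∑ j, ((g j : ℕ) + 1)) ≤ N)

lemma mem_MonN {r d N : ℕ} {g : Fin r → Fin d} :
    g ∈ MonN r d N ↔ Monotone g ∧ (∑ j, ((g j : ℕ) + 1)) ≤ N := by
  simp [MonN, Finset.mem_filter, mem_MonSet]

include h0 in
lemma kill (hr : 0 < r) : ∀ N : ℕ, ∀ b : Fin r → ℕ, (∀ j, b j ≤ d) → (∑ j, b j) ≤ N →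
    Polynomial.aeval Elin (∏ g ∈ MonN r d N, (X - C (∏ i, γ (g i)))) (T γ fb b) = 0 := by
  intro N
  induction N using Nat.strong_induction_on with
  | _ N IH =>
  intro b hb hsum
  by_cases hz : ∃ j, b j = 0
  · obtain ⟨j0, hj0⟩ := hz
    rw [T_eq_zero γ fb h0 b j0 hj0, map_zero]
  push_neg at hz
  have hb1 : ∀ j, 1 ≤ b j := fun j => Nat.one_le_iff_ne_zero.mpr (hz j)
  rcases lt_or_eq_of_le hsum with hlt | heq
  · have hsub : MonN r d (N - 1) ⊆ MonN r d N := fun g hg => by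
      rw [mem_MonN] at *
      exact ⟨hg.1, hg.2.trans (by omega)⟩
    have h0' := IH (N - 1) (by omega) b hb (by omega)
    rw [← Finset.prod_sdiff hsub, map_mul, Module.End.mul_apply, h0', map_zero]
  · set τ := Tuple.sort b with hτ
    have hmono : Monotone (b ∘ τ) := Tuple.monotone_sort b
    have hlt' : ∀ j, b (τ j) - 1 < d := fun j => by
      have h1 := hb (τ j); have h2 := hb1 (τ j); omega
    set m : Fin r → Fin d := fun j => ⟨b (τ j) - 1, hlt' j⟩ with hm
    have hmmono : Monotone m := by
      intro j k hjk
      have := hmono hjk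
      simp only [Function.comp_apply] at this
      simp only [hm, Fin.mk_le_mk]
      omega
    have hsum_m : (∑ j, ((m j : ℕ) + 1)) = N := by
      have hc : ∀ j : Fin r, ((m j : ℕ) + 1) = b (τ j) := fun j => by
        simp only [hm]
        have := hb1 (τ j); omega
      rw [Finset.sum_congr rfl fun j _ => hc j, Equiv.sum_comp τ b]
      exact heq
    have hNpos : 1 ≤ N := by
      have := hb1 ⟨0, hr⟩
      have := Finset.single_le_sum (f := b) (fun j _ => Nat.zero_le _)
        (Finset.mem_univ ⟨0, hr⟩)
      omega
    have hmem : m ∈ MonN r d N := mem_MonN.mpr ⟨hmmono, le_of_eq hsum_m⟩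
    have hEvm : (∏ i, γ (m i)) = ∏ j, Ev γ (b j) := by
      have h1 : ∀ j, γ (m j) = Ev γ (b (τ j)) := fun j => by
        rw [Ev, dif_pos ⟨hb1 (τ j), hb (τ j)⟩]
      rw [Finset.prod_congr rfl fun j _ => h1 j, Equiv.prod_comp τ (fun j => Ev γ (b j))]
    rw [← Finset.prod_erase_mul _ _ hmem, map_mul, Module.End.mul_apply]
    have hinner : Polynomial.aeval Elin (X - C (∏ i, γ (m i))) (T γ fb b) =
        ∑ S ∈ Finset.univ.erase (Finset.univ : Finset (Fin r)),
          (∏ j ∈ S, Ev γ (b j)) • T γ fb (fun j => if j ∈ S then b j else b j - 1) := by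
      rw [map_sub, Polynomial.aeval_X, Polynomial.aeval_C, LinearMap.sub_apply,
        Module.algebraMap_end_apply, Elin_T γ fb h0 b hb,
        ← Finset.add_sum_erase _ _ (Finset.mem_univ (Finset.univ : Finset (Fin r)))]
      have huniv : (∏ j ∈ (Finset.univ : Finset (Fin r)), Ev γ (b j)) •
          T γ fb (fun j => if j ∈ (Finset.univ : Finset (Fin r)) then b j else b j - 1)
          = (∏ i, γ (m i)) • T γ fb b := by
        rw [hEvm]
        congr 1
        congr 1
        funext j
        simp
      rw [huniv]
      abel
    rw [hinner, map_sum]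
    apply Finset.sum_eq_zero
    intro S hS
    rw [map_smul]
    set b' : Fin r → ℕ := fun j => if j ∈ S then b j else b j - 1 with hb'
    by_cases hz' : ∃ j, b' j = 0
    · obtain ⟨j0, hj0⟩ := hz'
      rw [T_eq_zero γ fb h0 b' j0 hj0, map_zero, smul_zero]
    push_neg at hz'
    have hSne : S ≠ Finset.univ := (Finset.mem_erase.mp hS).1
    obtain ⟨j1, hj1⟩ : ∃ j, j ∉ S := by
      by_contra hc
      push_neg at hc
      exact hSne (Finset.eq_univ_iff_forall.mpr hc)
    have hble : ∀ j, b' j ≤ b j := fun j => by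
      simp only [hb']
      split <;> omega
    have hbl : b' j1 < b j1 := by
      simp only [hb', if_neg hj1]
      have := hb1 j1; omega
    have hsum' : (∑ j, b' j) < N := by
      calc (∑ j, b' j) < ∑ j, b j :=
            Finset.sum_lt_sum (fun j _ => hble j) ⟨j1, Finset.mem_univ j1, hbl⟩
        _ = N := heq
    have hb'd : ∀ j, b' j ≤ d := fun j => le_trans (hble j) (hb j)
    have h0' := IH (N - 1) (by omega) b' hb'd (by omega)
    have hsub : MonN r d (N - 1) ⊆ (MonN r d N).erase m := by
      intro g hg
      rw [mem_MonN] at hg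
      rw [Finset.mem_erase]
      refine ⟨?_, mem_MonN.mpr ⟨hg.1, hg.2.trans (by omega)⟩⟩
      intro hgm
      rw [hgm] at hg
      have := hg.2
      rw [hsum_m] at this
      omega
    rw [← Finset.prod_sdiff hsub, map_mul, Module.End.mul_apply, h0', map_zero, smul_zero]

lemma u_top (i : Fin r) : u γ fb i d = fb i := by
  rw [u]
  have hPk : Pk γ d = 1 := by
    unfold Pk
    rw [Finset.filter_false_of_mem, Finset.prod_empty]
    intro j _
    have := j.isLt
    omega
  rw [hPk, map_one, Module.End.one_apply]

lemma T_top : T γ fb (fun _ => d) = (Nat.factorial r) • ∏ i, fb i := by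
  rw [T]
  rw [Finset.sum_congr rfl (fun σ _ => Finset.prod_congr rfl fun i _ => u_top γ fb i)]
  rw [Finset.sum_const, Finset.card_univ, Fintype.card_perm]
  congr 1
  simp

end Main

end Stmt4


/-- If `f₁, …, f_r` each satisfy a linear recurrence with characteristic
polynomial `Q(t)` (monic of degree `d`, with roots `γ` in the algebraic closure), then their
pointwise product satisfies a linear recurrence with characteristic polynomial `Q^⟨h_r⟩(t)`. -/
theorem statement4 {K : Type} [Field K] [CharZero K]
    (Q : Polynomial K) (hQ : Q.Monic) (d : ℕ) (hd : Q.natDegree = d)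
    (γ : Fin d → AlgebraicClosure K)
    (hγ : Q.map (algebraMap K (AlgebraicClosure K)) =
      ∏ i, (Polynomial.X - Polynomial.C (γ i)))
    (r : ℕ) (hr : 1 ≤ r) (f : Fin r → ℕ → K)
    (hf : ∀ i, SatisfiesLinRec (f i) Q) :
    SatisfiesLinRec (fun ℓ => algebraMap K (AlgebraicClosure K) (∏ i, f i ℓ))
      (plethH γ r) := by
  haveI : CharZero (AlgebraicClosure K) :=
    charZero_of_injective_algebraMap (algebraMap K (AlgebraicClosure K)).injective
  set φ := algebraMap K (AlgebraicClosure K) with hφ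
  set fb : Fin r → Stmt4.Seq (AlgebraicClosure K) := fun i => ↑(fun n => φ (f i n)) with hfb
  have h0 : ∀ i, Polynomial.aeval Stmt4.Elin
      (∏ j, (Polynomial.X - Polynomial.C (γ j))) (fb i) = 0 := by
    intro i
    rw [← hγ]
    have hs : SatisfiesLinRec (fun n => φ (f i n)) (Q.map φ) := by
      have hev := hf i
      unfold SatisfiesLinRec at hev ⊢
      have hdeg : (Q.map φ).natDegree = Q.natDegree := hQ.natDegree_map φ
      rw [hdeg]
      filter_upwards [hev] with n hn
      have h2 := congrArg φ hn
      rw [map_sum] at h2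
      simpa [Polynomial.coeff_map] using h2
    exact (Stmt4.satisfiesLinRec_iff _ _).mp hs
  have hkill := Stmt4.kill γ fb h0 hr (∑ _j : Fin r, d) (fun _ => d)
    (fun _ => le_refl d) (le_refl _)
  have hMon : Stmt4.MonN r d (∑ _j : Fin r, d) = Stmt4.MonSet r d := by
    unfold Stmt4.MonN
    apply Finset.filter_true_of_mem
    intro g _
    apply Finset.sum_le_sum
    intro j _
    have := (g j).isLt
    omega
  rw [hMon, Stmt4.T_top] at hkill
  have hpleth : plethH γ r = ∏ g ∈ Stmt4.MonSet r d,
      (Polynomial.X - Polynomial.C (∏ i, γ (g i))) := by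
    rw [plethH, ← finprod_mem_coe_finset]
    congr 1
    ext g
    simp [Stmt4.mem_MonSet]
  have h3 := map_prod (Filter.Germ.coeRingHom (Filter.cofinite : Filter ℕ))
    (fun i => fun n => φ (f i n)) Finset.univ
  simp only [Filter.Germ.coe_coeRingHom] at h3
  have hprod : (∏ i, fb i) =
      (↑(fun n => φ (∏ i, f i n)) : Stmt4.Seq (AlgebraicClosure K)) := by
    rw [hfb]
    refine Eq.trans ?_ (h3.symm.trans ?_)
    · rfl
    · congr 1
      funext n
      rw [Finset.prod_apply]
      exact (map_prod φ (fun i => f i n) Finset.univ).symm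
  rw [hprod, ← hpleth, map_nsmul] at hkill
  rw [Stmt4.satisfiesLinRec_iff]
  have hcast : ((Nat.factorial r : AlgebraicClosure K)) •
      (Polynomial.aeval Stmt4.Elin (plethH γ r))
      (↑(fun n => φ (∏ i, f i n)) : Stmt4.Seq (AlgebraicClosure K)) = 0 := by
    rw [Nat.cast_smul_eq_nsmul]
    exact hkill
  have hne : (Nat.factorial r : AlgebraicClosure K) ≠ 0 :=
    Nat.cast_ne_zero.mpr (Nat.factorial_ne_zero r)
  have h4 := congrArg (fun y => (Nat.factorial r : AlgebraicClosure K)⁻¹ • y) hcast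
  simp only [smul_smul, inv_mul_cancel₀ hne, one_smul, smul_zero] at h4
  exact h4
end

section
/- Fix integers n, m ≥ 1 and 1 ≤ r ≤ n, a partition λ with at most r parts, and the rectangular partition μ = (m, m, …, m) with r parts. Then the sequence f : ℕ → ℚ(x₁,…,x_n) given by f(ℓ) = s_{λ+ℓμ}(x₁,…,x_n) satisfies, for all but finitely many ℓ, a linear recurrence with characteristic polynomial Π_{1 ≤ i₁ < i₂ < … < i_r ≤ n} (t − (x_{i₁}x_{i₂}⋯x_{i_r})^m). -/
/-- `T : ℕ → ℕ → Fin n` is a semistandard Young tableau of the shape with row lengths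
`lamE` (a partition given as a function `ℕ → ℕ`), with entries in `{1,…,n}` (here `Fin n`):
rows weakly increase, columns strictly increase, and `T` is normalized to `0` outside the
diagram. -/
def IsSSYT (n : ℕ) (hn : 0 < n) (lamE : ℕ → ℕ) (T : ℕ → ℕ → Fin n) : Prop :=
  (∀ i j, j + 1 < lamE i → T i j ≤ T i (j + 1)) ∧
  (∀ i j, j < lamE (i + 1) → T i j < T (i + 1) j) ∧
  (∀ i j, lamE i ≤ j → T i j = ⟨0, hn⟩)

/-- The Schur polynomial `s_λ(x₁,…,x_n)`: the sum over all semistandard Young tableaux of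
shape `λ` (with at most `r` rows) with entries in `{1,…,n}` of the corresponding monomial. -/
noncomputable def schurMv (n : ℕ) (hn : 0 < n) (r : ℕ) (lamE : ℕ → ℕ) :
    MvPolynomial (Fin n) ℚ :=
  ∑ᶠ T ∈ {T : ℕ → ℕ → Fin n | IsSSYT n hn lamE T},
    ∏ i ∈ Finset.range r, ∏ j ∈ Finset.range (lamE i), MvPolynomial.X (T i j)

namespace Statement13Aux

open MvPolynomial Finset

noncomputable section

/-- The row lengths of the shape `λ` padded by `p` extra columns of full height `r`. -/
def lamF (r : ℕ) (lam : Fin r → ℕ) (p : ℕ) : ℕ → ℕ :=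
  fun i => if h : i < r then lam ⟨i, h⟩ + p else 0

lemma lamF_lt {r : ℕ} {lam : Fin r → ℕ} {p i : ℕ} (h : i < r) :
    lamF r lam p i = lam ⟨i, h⟩ + p := dif_pos h

lemma lamF_ge {r : ℕ} {lam : Fin r → ℕ} {p i : ℕ} (h : r ≤ i) :
    lamF r lam p i = 0 := dif_neg (by omega)

/-- The monomial weight of a filling. -/
def wtF (n r : ℕ) (lamE : ℕ → ℕ) (T : ℕ → ℕ → Fin n) : MvPolynomial (Fin n) ℚ :=
  ∏ i ∈ Finset.range r, ∏ j ∈ Finset.range (lamE i), X (T i j)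

/-- The index type of strictly increasing columns of height `r`. -/
abbrev ColT (n r : ℕ) := {g : Fin r → Fin n // StrictMono g}

noncomputable instance (n r : ℕ) : Fintype (ColT n r) := Fintype.ofFinite _

/-- The set of all SSYT of the padded shape. -/
def Sset (n : ℕ) (hn : 0 < n) (r : ℕ) (lam : Fin r → ℕ) (p : ℕ) : Set (ℕ → ℕ → Fin n) :=
  {T | IsSSYT n hn (lamF r lam p) T}

/-- The set of SSYT of the padded shape whose first column equals `g`. -/
def SsetC (n : ℕ) (hn : 0 < n) (r : ℕ) (lam : Fin r → ℕ) (p : ℕ) (g : ColT n r) :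
    Set (ℕ → ℕ → Fin n) :=
  {T | IsSSYT n hn (lamF r lam p) T ∧ ∀ i : Fin r, T (i : ℕ) 0 = g.1 i}

lemma finS (n : ℕ) (hn : 0 < n) (r : ℕ) (lam : Fin r → ℕ) (p : ℕ) :
    (Sset n hn r lam p).Finite := by
  classical
  set q := (Finset.univ.sup lam) + p with hqdef
  have hle : ∀ i, lamF r lam p i ≤ q := by
    intro i
    unfold lamF
    split
    · exact Nat.add_le_add_right (Finset.le_sup (Finset.mem_univ _)) p
    · exact Nat.zero_le _
  have hinj : Set.InjOn
      (fun (T : ℕ → ℕ → Fin n) => fun (i : Fin r) (j : Fin q) => T (i : ℕ) (j : ℕ))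
      (Sset n hn r lam p) := by
    intro T hT T' hT' hEq
    funext i j
    by_cases hle2 : lamF r lam p i ≤ j
    · rw [hT.2.2 i j hle2, hT'.2.2 i j hle2]
    · push_neg at hle2
      have hi : i < r := by
        by_contra hi
        push_neg at hi
        rw [lamF_ge hi] at hle2
        omega
      have hj : j < q := lt_of_lt_of_le hle2 (hle i)
      exact congrFun (congrFun hEq ⟨i, hi⟩) ⟨j, hj⟩
  exact Set.Finite.of_finite_image (Set.toFinite _) hinj

lemma finC (n : ℕ) (hn : 0 < n) (r : ℕ) (lam : Fin r → ℕ) (p : ℕ) (g : ColT n r) :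
    (SsetC n hn r lam p g).Finite :=
  (finS n hn r lam p).subset fun _ hT => hT.1

/-- The sum of weights of SSYT with first column `g`. -/
def colv (n : ℕ) (hn : 0 < n) (r : ℕ) (lam : Fin r → ℕ) (p : ℕ) (g : ColT n r) :
    MvPolynomial (Fin n) ℚ :=
  ∑ T ∈ (finC n hn r lam p g).toFinset, wtF n r (lamF r lam p) T

lemma col0_mono {n r : ℕ} {hn : 0 < n} {lam : Fin r → ℕ} {p : ℕ} (hp : 0 < p)
    {T : ℕ → ℕ → Fin n} (hT : IsSSYT n hn (lamF r lam p) T) :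
    StrictMono fun i : Fin r => T (i : ℕ) 0 := by
  have hadj : ∀ i : ℕ, i + 1 < r → T i 0 < T (i + 1) 0 := by
    intro i hi
    exact hT.2.1 i 0 (by rw [lamF_lt hi]; omega)
  have key : ∀ b : ℕ, b < r → ∀ a : ℕ, a < b → T a 0 < T b 0 := by
    intro b
    induction b with
    | zero => omega
    | succ b ih =>
      intro hbr a hab
      rcases Nat.lt_succ_iff_lt_or_eq.mp hab with h | h
      · exact lt_trans (ih (by omega) a h) (hadj b hbr)
      · subst h; exact hadj a hbr
  intro a b hab
  exact key b b.2 a (by exact_mod_cast hab)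

/-- Splitting a sum over all SSYT according to the first column. -/
lemma sum_split {n r : ℕ} (hn : 0 < n) (lam : Fin r → ℕ) {p : ℕ} (hp : 0 < p)
    (f : (ℕ → ℕ → Fin n) → MvPolynomial (Fin n) ℚ) :
    ∑ T ∈ (finS n hn r lam p).toFinset, f T
      = ∑ g : ColT n r, ∑ T ∈ (finC n hn r lam p g).toFinset, f T := by
  classical
  have key : ∀ T ∈ (finS n hn r lam p).toFinset,
      f T = ∑ g : ColT n r, if (∀ i : Fin r, T (i : ℕ) 0 = g.1 i) then f T else 0 := by
    intro T hT
    rw [Set.Finite.mem_toFinset] at hT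
    have hmono : StrictMono fun i : Fin r => T (i : ℕ) 0 := col0_mono hp hT
    have he : ∀ g : ColT n r,
        (∀ i : Fin r, T (i : ℕ) 0 = g.1 i) ↔ g = (⟨_, hmono⟩ : ColT n r) := by
      intro g
      constructor
      · intro h
        exact (Subtype.ext (funext fun i => (h i))).symm
      · rintro rfl
        intro i; rfl
    simp only [he]
    rw [Finset.sum_ite_eq' Finset.univ (⟨_, hmono⟩ : ColT n r) (fun _ => f T)]
    simp
  rw [Finset.sum_congr rfl key, Finset.sum_comm]
  refine Finset.sum_congr rfl fun g _ => ?_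
  rw [← Finset.sum_filter]
  refine Finset.sum_congr ?_ fun _ _ => rfl
  ext T
  simp only [Finset.mem_filter, Set.Finite.mem_toFinset]
  constructor
  · rintro ⟨h1, h2⟩; exact ⟨h1, h2⟩
  · rintro ⟨h1, h2⟩; exact ⟨h1, h2⟩

/-- `schurMv` of the padded shape as a sum of first-column contributions. -/
lemma schur_eq {n r : ℕ} (hn : 0 < n) (lam : Fin r → ℕ) {p : ℕ} (hp : 0 < p) :
    schurMv n hn r (lamF r lam p) = ∑ g : ColT n r, colv n hn r lam p g := by
  have h0 : schurMv n hn r (lamF r lam p)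
      = ∑ᶠ T ∈ Sset n hn r lam p, wtF n r (lamF r lam p) T := rfl
  rw [h0, ← (finS n hn r lam p).coe_toFinset, finsum_mem_coe_finset]
  exact sum_split hn lam hp _

/-- The transfer-matrix step: peeling off the first column. -/
lemma colv_step {n r : ℕ} (hn : 0 < n) (lam : Fin r → ℕ) {p : ℕ} (hp : 0 < p) (g : ColT n r) :
    colv n hn r lam (p + 1) g
      = ∑ g' : ColT n r,
          (if ∀ i, g.1 i ≤ g'.1 i then ∏ i, X (g.1 i) else (0 : MvPolynomial (Fin n) ℚ))
            * colv n hn r lam p g' := by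
  classical
  -- rewrite the right hand side as a single filtered sum
  have hR : ∀ g' : ColT n r,
      (if ∀ i, g.1 i ≤ g'.1 i then ∏ i, X (g.1 i) else (0 : MvPolynomial (Fin n) ℚ))
          * colv n hn r lam p g'
        = ∑ T ∈ (finC n hn r lam p g').toFinset,
            (if ∀ i : Fin r, g.1 i ≤ T (i : ℕ) 0
              then (∏ i, X (g.1 i)) * wtF n r (lamF r lam p) T else 0) := by
    intro g'
    rw [colv, Finset.mul_sum]
    refine Finset.sum_congr rfl fun T hT => ?_
    rw [Set.Finite.mem_toFinset] at hT
    have hiff : (∀ i : Fin r, g.1 i ≤ T (i : ℕ) 0) ↔ (∀ i, g.1 i ≤ g'.1 i) := by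
      constructor
      · intro h i; rw [← hT.2 i]; exact h i
      · intro h i; rw [hT.2 i]; exact h i
    rw [ite_mul, zero_mul]
    exact (if_congr hiff.symm rfl rfl)
  simp only [hR]
  rw [← sum_split hn lam hp]
  rw [show (∑ T ∈ (finS n hn r lam p).toFinset,
        (if ∀ i : Fin r, g.1 i ≤ T (i : ℕ) 0
          then (∏ i, X (g.1 i)) * wtF n r (lamF r lam p) T else 0))
      = ∑ T ∈ (finS n hn r lam p).toFinset.filter
            (fun T => ∀ i : Fin r, g.1 i ≤ T (i : ℕ) 0),
          (∏ i, X (g.1 i)) * wtF n r (lamF r lam p) T from (Finset.sum_filter _ _).symm]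
  -- now the explicit bijection
  rw [colv]
  refine Finset.sum_nbij' (fun T => fun i j => T i (j + 1))
    (fun T' => fun i j => if j = 0
      then (if h : i < r then g.1 ⟨i, h⟩ else (⟨0, hn⟩ : Fin n)) else T' i (j - 1))
    ?_ ?_ ?_ ?_ ?_
  · -- forward map lands in the target
    intro T hT
    rw [Set.Finite.mem_toFinset] at hT
    obtain ⟨hT1, hT2⟩ := hT
    rw [Finset.mem_filter, Set.Finite.mem_toFinset]
    refine ⟨⟨?_, ?_, ?_⟩, ?_⟩
    · intro i j hj
      have hi : i < r := by
        by_contra hi; push_neg at hi; rw [lamF_ge hi] at hj; omega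
      rw [lamF_lt hi] at hj
      exact hT1.1 i (j + 1) (by rw [lamF_lt hi]; omega)
    · intro i j hj
      have hi : i + 1 < r := by
        by_contra hi; push_neg at hi; rw [lamF_ge hi] at hj; omega
      rw [lamF_lt hi] at hj
      exact hT1.2.1 i (j + 1) (by rw [lamF_lt hi]; omega)
    · intro i j hj
      by_cases hi : i < r
      · rw [lamF_lt hi] at hj
        exact hT1.2.2 i (j + 1) (by rw [lamF_lt hi]; omega)
      · push_neg at hi
        exact hT1.2.2 i (j + 1) (by rw [lamF_ge hi]; omega)
    · intro i
      have h0 : T (i : ℕ) 0 = g.1 i := hT2 i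
      have : T (i : ℕ) 0 ≤ T (i : ℕ) 1 := by
        refine hT1.1 (i : ℕ) 0 ?_
        rw [lamF_lt (show (i : ℕ) < r from i.2)]
        omega
      rw [← h0]; exact this
  · -- backward map lands in the source
    intro T' hT'
    rw [Finset.mem_filter, Set.Finite.mem_toFinset] at hT'
    obtain ⟨hT1, hT2⟩ := hT'
    rw [Set.Finite.mem_toFinset]
    refine ⟨⟨?_, ?_, ?_⟩, ?_⟩
    · -- rows weakly increase
      intro i j hj
      have hi : i < r := by
        by_contra hi; push_neg at hi; rw [lamF_ge hi] at hj; omega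
      rw [lamF_lt hi] at hj
      rcases Nat.eq_zero_or_pos j with h0 | h0
      · subst h0
        simp only [if_pos rfl, if_neg (by omega : ¬ (0 + 1 = 0)), dif_pos hi]
        have := hT2 ⟨i, hi⟩
        simpa using this
      · have hjne : ¬ (j = 0) := by omega
        have hjne' : ¬ (j + 1 = 0) := by omega
        simp only [if_neg hjne, if_neg hjne']
        have : j - 1 + 1 < lamF r lam p i := by rw [lamF_lt hi]; omega
        have hrow := hT1.1 i (j - 1) this
        have e1 : j - 1 + 1 = j := by omega
        have e2 : j + 1 - 1 = j := by omega
        rw [e1] at hrow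
        rw [e2]
        exact hrow
    · -- columns strictly increase
      intro i j hj
      have hi1 : i + 1 < r := by
        by_contra hi; push_neg at hi; rw [lamF_ge hi] at hj; omega
      have hi : i < r := by omega
      rw [lamF_lt hi1] at hj
      rcases Nat.eq_zero_or_pos j with h0 | h0
      · subst h0
        simp only [if_pos rfl, dif_pos hi, dif_pos hi1]
        exact g.2 (show (⟨i, hi⟩ : Fin r) < ⟨i + 1, hi1⟩ by
          rw [Fin.mk_lt_mk]; omega)
      · have hjne : ¬ (j = 0) := by omega
        simp only [if_neg hjne]
        refine hT1.2.1 i (j - 1) ?_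
        rw [lamF_lt hi1]; omega
    · -- normalization
      intro i j hj
      by_cases hi : i < r
      · rw [lamF_lt hi] at hj
        have hjne : ¬ (j = 0) := by omega
        simp only [if_neg hjne]
        refine hT1.2.2 i (j - 1) ?_
        rw [lamF_lt hi]; omega
      · push_neg at hi
        rcases Nat.eq_zero_or_pos j with h0 | h0
        · subst h0
          simp only [if_pos rfl, dif_neg (by omega : ¬ (i < r)), if_true]
        · have hjne : ¬ (j = 0) := by omega
          simp only [if_neg hjne]
          refine hT1.2.2 i (j - 1) ?_
          rw [lamF_ge hi]; omega
    · -- the first column equals g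
      intro i
      simp only [if_pos rfl, dif_pos i.2, if_true, Fin.eta]
  · -- left inverse
    intro T hT
    rw [Set.Finite.mem_toFinset] at hT
    obtain ⟨hT1, hT2⟩ := hT
    funext i j
    rcases Nat.eq_zero_or_pos j with h0 | h0
    · subst h0
      simp only [if_pos rfl]
      by_cases hi : i < r
      · rw [dif_pos hi]
        exact (hT2 ⟨i, hi⟩).symm
      · rw [dif_neg hi]
        push_neg at hi
        exact (hT1.2.2 i 0 (by rw [lamF_ge hi])).symm
    · have hjne : ¬ (j = 0) := by omega
      simp only [if_neg hjne]
      congr 1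
      omega
  · -- right inverse
    intro T' hT'
    funext i j
    simp only [if_neg (by omega : ¬ (j + 1 = 0))]
    congr 1
  · -- weights match
    intro T hT
    rw [Set.Finite.mem_toFinset] at hT
    obtain ⟨hT1, hT2⟩ := hT
    unfold wtF
    have h1 : ∀ i ∈ Finset.range r,
        ∏ j ∈ Finset.range (lamF r lam (p + 1) i), X (T i j)
          = (X (T i 0) : MvPolynomial (Fin n) ℚ)
              * ∏ j ∈ Finset.range (lamF r lam p i), X (T i (j + 1)) := by
      intro i hi
      rw [Finset.mem_range] at hi
      rw [lamF_lt hi, lamF_lt hi]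
      rw [show lam ⟨i, hi⟩ + (p + 1) = (lam ⟨i, hi⟩ + p) + 1 from rfl]
      rw [Finset.prod_range_succ' (fun j => X (T i j)) (lam ⟨i, hi⟩ + p)]
      rw [mul_comm]
    rw [Finset.prod_congr rfl h1, Finset.prod_mul_distrib]
    congr 1
    rw [← Fin.prod_univ_eq_prod_range (fun i => X (T i 0)) r]
    exact Finset.prod_congr rfl fun i _ => by rw [hT2 i]

/-- Triangular matrices with prescribed diagonal: powers stay triangular. -/
lemma powTri {ι : Type*} [Fintype ι] [DecidableEq ι] [PartialOrder ι] {K : Type*} [CommRing K]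
    (B : Matrix ι ι K) (d : ι → K) (htri : ∀ a b, ¬ a ≤ b → B a b = 0)
    (hdiag : ∀ a, B a a = d a) (m : ℕ) :
    (∀ a b, ¬ a ≤ b → (B ^ m) a b = 0) ∧ (∀ a, (B ^ m) a a = d a ^ m) := by
  induction m with
  | zero =>
    constructor
    · intro a b hab
      rw [pow_zero]
      exact Matrix.one_apply_ne (fun h => hab (h ▸ le_refl a))
    · intro a
      rw [pow_zero, pow_zero]
      exact Matrix.one_apply_eq a
  | succ m ih =>
    constructor
    · intro a b hab
      rw [pow_succ, Matrix.mul_apply]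
      refine Finset.sum_eq_zero fun c _ => ?_
      by_cases h1 : a ≤ c
      · by_cases h2 : c ≤ b
        · exact absurd (le_trans h1 h2) hab
        · rw [htri c b h2, mul_zero]
      · rw [ih.1 a c h1, zero_mul]
    · intro a
      rw [pow_succ, Matrix.mul_apply]
      rw [Finset.sum_eq_single a]
      · rw [ih.2 a, hdiag, pow_succ]
      · intro c _ hca
        by_cases h1 : a ≤ c
        · have h2 : ¬ c ≤ a := fun h => hca (le_antisymm h h1)
          rw [htri c a h2, mul_zero]
        · rw [ih.1 a c h1, zero_mul]
      · intro h; exact absurd (Finset.mem_univ a) h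

/-- The key nilpotency statement: evaluating the "characteristic polynomial" of a triangular
matrix on the matrix kills every vector. -/
lemma nilp {ι : Type*} [Fintype ι] [DecidableEq ι] [PartialOrder ι] {K : Type*} [Field K]
    (M : Matrix ι ι K) (d : ι → K) (htri : ∀ a b, ¬ a ≤ b → M a b = 0)
    (hdiag : ∀ a, M a a = d a) (s : Finset ι) :
    ∀ v : ι → K, (∀ a b : ι, a ≤ b → b ∈ s → a ∈ s) → (∀ a, a ∉ s → v a = 0) →
    (Polynomial.aeval M (∏ g ∈ s, (Polynomial.X - Polynomial.C (d g)))).mulVec v = 0 := by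
  classical
  induction s using Finset.strongInduction with
  | _ s ih =>
    intro v hlow hv
    rcases s.eq_empty_or_nonempty with hs | hs
    · subst hs
      have hv0 : v = 0 := funext fun a => hv a (Finset.notMem_empty a)
      rw [Finset.prod_empty, map_one, Matrix.one_mulVec, hv0]
    · obtain ⟨g0, hg0, hmax⟩ := s.exists_maximal hs
      have hmax : ∀ x ∈ s, ¬ g0 < x := fun x hx hlt => lt_irrefl _ (lt_of_lt_of_le hlt (hmax hx hlt.le))
      rw [← Finset.prod_erase_mul s _ hg0, map_mul, ← Matrix.mulVec_mulVec]
      have hwv : (Polynomial.aeval M (Polynomial.X - Polynomial.C (d g0))).mulVec v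
          = M.mulVec v - d g0 • v := by
        rw [map_sub, Polynomial.aeval_X, Polynomial.aeval_C, Algebra.algebraMap_eq_smul_one,
          Matrix.sub_mulVec, Matrix.smul_mulVec, Matrix.one_mulVec]
      refine ih (s.erase g0) (Finset.erase_ssubset hg0) _ ?_ ?_
      · intro a b hab hb
        rw [Finset.mem_erase] at hb ⊢
        refine ⟨?_, hlow a b hab hb.2⟩
        rintro rfl
        exact hmax b hb.2 (lt_of_le_of_ne hab (Ne.symm hb.1))
      · intro a ha
        rw [hwv]
        simp only [Pi.sub_apply, Pi.smul_apply, smul_eq_mul]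
        by_cases has : a ∈ s
        · have haeq : a = g0 := by
            by_contra hne
            exact ha (Finset.mem_erase.mpr ⟨hne, has⟩)
          subst haeq
          have hM : M.mulVec v a = M a a * v a := by
            rw [Matrix.mulVec, dotProduct]
            refine Finset.sum_eq_single a ?_ ?_
            · intro b _ hba
              by_cases hMb : M a b = 0
              · rw [hMb, zero_mul]
              · have hle : a ≤ b := by
                  by_contra h; exact hMb (htri a b h)
                by_cases hvb : v b = 0
                · rw [hvb, mul_zero]
                · have hbs : b ∈ s := by
                    by_contra h; exact hvb (hv b h)
                  exact absurd (lt_of_le_of_ne hle (Ne.symm hba)) (hmax b hbs)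
            · intro h; exact absurd (Finset.mem_univ a) h
          rw [hM, hdiag]
          ring
        · have hva : v a = 0 := hv a has
          have hM : M.mulVec v a = 0 := by
            rw [Matrix.mulVec, dotProduct]
            refine Finset.sum_eq_zero fun b _ => ?_
            by_cases hvb : v b = 0
            · rw [hvb, mul_zero]
            · have hbs : b ∈ s := by
                by_contra h; exact hvb (hv b h)
              by_cases hMb : M a b = 0
              · rw [hMb, zero_mul]
              · have hle : a ≤ b := by
                  by_contra h; exact hMb (htri a b h)
                exact absurd (hlow a b hle hbs) has
          rw [hM, hva]
          ring

/-- Entrywise formula for a linear combination of matrices applied to a vector. -/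
lemma sum_smul_mulVec {ι : Type*} [Fintype ι] {K : Type*} [CommRing K]
    (N : Finset ℕ) (c : ℕ → K) (A : ℕ → Matrix ι ι K) (v : ι → K) (g : ι) :
    ((∑ k ∈ N, c k • A k).mulVec v) g = ∑ k ∈ N, c k * ((A k).mulVec v g) := by
  simp only [Matrix.mulVec, dotProduct, Matrix.sum_apply, Matrix.smul_apply, smul_eq_mul,
    Finset.sum_mul, Finset.mul_sum]
  rw [Finset.sum_comm]
  exact Finset.sum_congr rfl fun k _ => Finset.sum_congr rfl fun b _ => by ring

end

end Statement13Aux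

open Statement13Aux MvPolynomial in
/-- For a partition `λ` with at most `r` parts and
`μ = (m,…,m)` (`r` parts), the sequence `f(ℓ) = s_{λ+ℓμ}(x₁,…,x_n)` in `ℚ(x₁,…,x_n)`
satisfies a linear recurrence with characteristic polynomial
`Π_{1 ≤ i₁ < … < i_r ≤ n} (t − (x_{i₁}⋯x_{i_r})^m)`. -/
theorem statement13 (n m r : ℕ) (hn : 0 < n) (hm : 1 ≤ m) (hr : 1 ≤ r) (hrn : r ≤ n)
    (lam : Fin r → ℕ) (hlam : ∀ i j : Fin r, i ≤ j → lam j ≤ lam i) :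
    SatisfiesLinRec
      (fun ℓ : ℕ =>
        algebraMap (MvPolynomial (Fin n) ℚ) (FractionRing (MvPolynomial (Fin n) ℚ))
          (schurMv n hn r (fun i => if h : i < r then lam ⟨i, h⟩ + ℓ * m else 0)))
      (∏ᶠ g ∈ {g : Fin r → Fin n | StrictMono g},
        (Polynomial.X - Polynomial.C
          ((∏ i, algebraMap (MvPolynomial (Fin n) ℚ) (FractionRing (MvPolynomial (Fin n) ℚ))
            (MvPolynomial.X (g i))) ^ m))) := by
  classical
  set K := FractionRing (MvPolynomial (Fin n) ℚ) with hK
  let φ : MvPolynomial (Fin n) ℚ →+* K := algebraMap _ _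
  -- the transfer matrix over the fraction field
  let ρ : ColT n r → K := fun g => ∏ i, φ (X (g.1 i))
  let BK : Matrix (ColT n r) (ColT n r) K := fun g g' => if g ≤ g' then ρ g else 0
  let V : ℕ → ColT n r → K := fun p g => φ (colv n hn r lam p g)
  -- order facts
  have hle_iff : ∀ g g' : ColT n r, g ≤ g' ↔ ∀ i, g.1 i ≤ g'.1 i := by
    intro g g'
    rw [← Subtype.coe_le_coe]
    exact Pi.le_def
  -- one step of the transfer matrix
  have hstep : ∀ p : ℕ, 0 < p → V (p + 1) = BK.mulVec (V p) := by
    intro p hp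
    funext g
    have h1 := colv_step hn lam hp g
    have h2 : V (p + 1) g = φ (colv n hn r lam (p + 1) g) := rfl
    rw [h2, h1, map_sum]
    rw [Matrix.mulVec, dotProduct]
    refine Finset.sum_congr rfl fun g' _ => ?_
    rw [map_mul]
    congr 1
    rw [apply_ite φ, map_zero, map_prod]
    show _ = BK g g'
    simp only [BK]
    rw [if_congr (hle_iff g g').symm rfl rfl]
  -- iterating the step
  have hiter : ∀ p : ℕ, 0 < p → ∀ k : ℕ, V (p + k) = (BK ^ k).mulVec (V p) := by
    intro p hp k
    induction k with
    | zero =>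
      show V (p + 0) = _
      rw [Nat.add_zero, pow_zero, Matrix.one_mulVec]
    | succ k ih =>
      have : p + (k + 1) = (p + k) + 1 := by omega
      rw [this, hstep (p + k) (by omega), ih, Matrix.mulVec_mulVec, ← pow_succ']
  -- triangularity of BK
  have htri : ∀ a b : ColT n r, ¬ a ≤ b → BK a b = 0 := by
    intro a b hab
    simp only [BK]
    rw [if_neg hab]
  have hdiag : ∀ a : ColT n r, BK a a = ρ a := by
    intro a
    simp only [BK]
    rw [if_pos (le_refl a)]
  -- the characteristic polynomial as a finite product
  have hQprod :
      (∏ᶠ g ∈ {g : Fin r → Fin n | StrictMono g},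
        (Polynomial.X - Polynomial.C
          ((∏ i, algebraMap (MvPolynomial (Fin n) ℚ) K (MvPolynomial.X (g i))) ^ m)))
      = ∏ g : ColT n r, (Polynomial.X - Polynomial.C (ρ g ^ m)) := by
    rw [← Subtype.range_coe_subtype, finprod_mem_range Subtype.val_injective,
      finprod_eq_prod_of_fintype]
  rw [hQprod]
  set Q : Polynomial K := ∏ g : ColT n r, (Polynomial.X - Polynomial.C (ρ g ^ m)) with hQ
  -- the polynomial kills the iterated transfer matrix
  have hQ0 : ∀ v : ColT n r → K, (Polynomial.aeval (BK ^ m) Q).mulVec v = 0 := by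
    intro v
    have hTri := powTri BK ρ htri hdiag m
    exact nilp (BK ^ m) (fun g => ρ g ^ m) hTri.1 hTri.2 Finset.univ v
      (fun _ _ _ _ => Finset.mem_univ _) (fun a ha => absurd (Finset.mem_univ a) ha)
  -- now verify the recurrence for all ℓ ≥ 1
  rw [SatisfiesLinRec, Nat.cofinite_eq_atTop, Filter.eventually_atTop]
  refine ⟨1, fun ℓ hℓ => ?_⟩
  have hp : 0 < ℓ * m := by positivity
  set v : ColT n r → K := V (ℓ * m) with hv
  have hfk : ∀ k : ℕ,
      algebraMap (MvPolynomial (Fin n) ℚ) K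
          (schurMv n hn r (fun i => if h : i < r then lam ⟨i, h⟩ + (ℓ + k) * m else 0))
        = ∑ g : ColT n r, (((BK ^ m) ^ k).mulVec v) g := by
    intro k
    have hsh : (fun i => if h : i < r then lam ⟨i, h⟩ + (ℓ + k) * m else 0)
        = lamF r lam ((ℓ + k) * m) := rfl
    rw [hsh, schur_eq hn lam (by positivity), map_sum]
    have harith : (ℓ + k) * m = ℓ * m + k * m := add_mul ℓ k m
    have : ∀ g : ColT n r, φ (colv n hn r lam ((ℓ + k) * m) g) = V ((ℓ + k) * m) g :=
      fun g => rfl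
    refine Finset.sum_congr rfl fun g _ => ?_
    rw [this g, harith, hiter (ℓ * m) hp (k * m), ← hv,
      show BK ^ (k * m) = (BK ^ m) ^ k by rw [mul_comm k m, pow_mul]]
  show ∑ k ∈ Finset.range (Q.natDegree + 1), Q.coeff k * algebraMap (MvPolynomial (Fin n) ℚ) K
    (schurMv n hn r (fun i => if h : i < r then lam ⟨i, h⟩ + (ℓ + k) * m else 0)) = 0
  simp only [hfk]
  -- move to the matrix picture
  have hmain : ∑ k ∈ Finset.range (Q.natDegree + 1),
      Q.coeff k * ∑ g : ColT n r, (((BK ^ m) ^ k).mulVec v) g = 0 := by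
    have hswap : ∑ k ∈ Finset.range (Q.natDegree + 1),
        Q.coeff k * ∑ g : ColT n r, (((BK ^ m) ^ k).mulVec v) g
        = ∑ g : ColT n r, ∑ k ∈ Finset.range (Q.natDegree + 1),
            Q.coeff k * (((BK ^ m) ^ k).mulVec v) g := by
      rw [Finset.sum_comm]
      exact Finset.sum_congr rfl fun k _ => Finset.mul_sum _ _ _
    rw [hswap]
    have haev : ∀ g : ColT n r,
        ∑ k ∈ Finset.range (Q.natDegree + 1), Q.coeff k * (((BK ^ m) ^ k).mulVec v) g
          = ((Polynomial.aeval (BK ^ m) Q).mulVec v) g := by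
      intro g
      rw [Polynomial.aeval_eq_sum_range, sum_smul_mulVec]
    rw [Finset.sum_congr rfl (fun g _ => haev g)]
    rw [hQ0 v]
    simp
  exact hmain
end
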